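/- If Q is stateless and Effects(T ∥ Q*) ⊆ Effects(Q*) for every thread T of P, then for every execution of P ∥ Q* reaching state (s, cf) and every thread identifier k with initial thread T_k, there is an execution of the two-thread system T_k ∥ Q* reaching the state with shared heap s in which the distinguished thread has configuration cf(k) and all summary threads are in their initial configurations. -/
import Mathlib


namespace Paper

/-- Threads of the core language. -/
inductive Thread (C : Type) : Type where
  | prim : C → Thread C
  | skip : Thread C
  | seq : Thread C → Thread C → Thread C
  | choice : Thread C → Thread C → Thread C
  | star : Thread C → Thread C
  | atomic : Thread C → Thread C

/-- Heaps: partial maps from variables and addresses to naturals. -/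
abbrev Heap := (String ⊕ ℕ) → Option ℕ

def emp : Heap := fun _ => none

/-- Memory-cell (address) part of the domain of a heap. -/
def addrDom (h : Heap) : Set ℕ := {a | h (Sum.inr a) ≠ none}

/-- Disjointness on memory cells. -/
def Disj (h₁ h₂ : Heap) : Prop := addrDom h₁ ∩ addrDom h₂ = ∅

abbrev Config (C : Type) := Thread C × Heap

/-- Thread-configuration maps (partial over thread identifiers). -/
abbrev Cf (C : Type) := ℕ → Option (Config C)

/-- A state (s, cf) is separated. -/
def Separated {C : Type} (s : Heap) (cf : Cf C) : Prop :=
  (∀ i c, cf i = some c → Disj s c.2) ∧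
  (∀ i j ci cj, i ≠ j → cf i = some ci → cf j = some cj → Disj ci.2 cj.2)

variable {C : Type}

mutual
  /-- Sequential small-step semantics, parameterized by the semantics `prim`
  of primitive commands (relating shared/owned heaps before and after). -/
  inductive SeqStep (prim : C → Heap → Heap → Heap → Heap → Prop) :
      Heap → Config C → Heap → Config C → Prop where
    | primStep {c s o s' o'} : prim c s o s' o' →
        SeqStep prim s (Thread.prim c, o) s' (Thread.skip, o')
    | seqL {s T₁ o s' T₁' o'} (T₂ : Thread C) :
        SeqStep prim s (T₁, o) s' (T₁', o') →
        SeqStep prim s (Thread.seq T₁ T₂, o) s' (Thread.seq T₁' T₂, o')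
    | seqSkip {s o} (T : Thread C) :
        SeqStep prim s (Thread.seq Thread.skip T, o) s (T, o)
    | choiceL {s T₁ o s' T₁' o'} (T₂ : Thread C) :
        SeqStep prim s (T₁, o) s' (T₁', o') →
        SeqStep prim s (Thread.choice T₁ T₂, o) s' (T₁', o')
    | choiceR {s T₂ o s' T₂' o'} (T₁ : Thread C) :
        SeqStep prim s (T₂, o) s' (T₂', o') →
        SeqStep prim s (Thread.choice T₁ T₂, o) s' (T₂', o')
    | starUnfold {s o} (T : Thread C) :
        SeqStep prim s (Thread.star T, o) s (Thread.seq T (Thread.star T), o)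
    | starExit {s o} (T : Thread C) :
        SeqStep prim s (Thread.star T, o) s (Thread.skip, o)
    | atomic {s T o s' o'} :
        SeqSteps prim s (T, o) s' (Thread.skip, o') →
        SeqStep prim s (Thread.atomic T, o) s' (Thread.skip, o')

  /-- Finitely many sequential steps. -/
  inductive SeqSteps (prim : C → Heap → Heap → Heap → Heap → Prop) :
      Heap → Config C → Heap → Config C → Prop where
    | refl {s c} : SeqSteps prim s c s c
    | step {s c s' c' s'' c''} : SeqStep prim s c s' c' →
        SeqSteps prim s' c' s'' c'' → SeqSteps prim s c s'' c''
end

variable (prim : C → Heap → Heap → Heap → Heap → Prop)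

/-- Parallel (program) step: one thread steps sequentially and the
resulting state must be separated. -/
def ParStep (st st' : Heap × Cf C) : Prop :=
  ∃ i c c', st.2 i = some c ∧ SeqStep prim st.1 c st'.1 c' ∧
    st'.2 = Function.update st.2 i (some c') ∧ Separated st'.1 st'.2

def ParSteps : Heap × Cf C → Heap × Cf C → Prop :=
  Relation.ReflTransGen (ParStep prim)

/-- A program is a parallel composition of finitely many threads. -/
abbrev Program (C : Type) := List (Thread C)

/-- `Q*` : Kleene star applied to every thread. -/
def starP (P : Program C) : Program C := P.map Thread.star

/-- Initial thread configurations: each thread with the empty owned heap. -/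
def cfInit (P : Program C) : Cf C := fun i => (P[i]?).map fun T => (T, emp)

/-- Reachable shared heaps of a program from initial shared heap `sinit`. -/
def Reach (sinit : Heap) (P : Program C) : Set Heap :=
  {s | ∃ cf, ParSteps prim (sinit, cfInit P) (s, cf)}

/-- Effects: single-step shared-heap updates along executions. -/
def Effects (sinit : Heap) (P : Program C) : Set (Heap × Heap) :=
  {p | ∃ cf cf', ParSteps prim (sinit, cfInit P) (p.1, cf) ∧
       ParStep prim (p.1, cf) (p.2, cf')}

/-- Statelessness: every thread of `Q`, from any shared heap reachable by `Q*`
with empty owned heap, steps in one step to `(skip, emp)`. -/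
def Stateless (sinit : Heap) (Q : Program C) : Prop :=
  ∀ T ∈ Q, ∀ s ∈ Reach prim sinit (starP Q), ∀ s' c,
    SeqStep prim s (T, emp) s' c → c = (Thread.skip, emp)

/-- Assumption 1: sequential steps preserve separation. -/
def PreservesSep : Prop :=
  ∀ s c s' c', SeqStep prim s c s' c' → Disj s c.2 → Disj s' c'.2

/-- `Q` is a stateless effect summary of `P`. -/
def IsSummary (sinit : Heap) (P Q : Program C) : Prop :=
  Stateless prim sinit Q ∧
  ∀ T ∈ P, Effects prim sinit (T :: starP Q) ⊆ Effects prim sinit (starP Q)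

/-- Sequential-step successors of a set of views. -/
def post (X : Set (Heap × Config C)) : Set (Heap × Config C) :=
  {v' | ∃ v ∈ X, SeqStep prim v.1 v.2 v'.1 v'.2}

/-- Interference successors: replace the shared heap of a view by the result
of one step of the summary `Q` from its initial configuration, subject to
separation of the resulting view. -/
def env (Q : Program C) (X : Set (Heap × Config C)) : Set (Heap × Config C) :=
  {v' | Disj v'.1 v'.2.2 ∧ ∃ s cf', (s, v'.2) ∈ X ∧
        ParStep prim (s, cfInit Q) (v'.1, cf')}

/-- Initial views. -/
def X₀ (sinit : Heap) (P : Program C) : Set (Heap × Config C) :=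
  {v | v.1 = sinit ∧ ∃ T ∈ P, v.2 = (T, emp)}

/-- The least fixed point of the thread-modular analysis with interference
computed by the candidate summary `Q`. -/
def Fix (sinit : Heap) (P Q : Program C) : Set (Heap × Config C) :=
  ⋂₀ {X | X₀ sinit P ⊆ X ∧ post prim X ⊆ X ∧ env prim Q X ⊆ X}

/-- Shared heaps occurring in the fixed point. -/
def FixHeaps (sinit : Heap) (P Q : Program C) : Set Heap :=
  {s | ∃ c, (s, c) ∈ Fix prim sinit P Q}


/-! ### Auxiliary machinery for the simulation lemma -/

lemma addrDom_emp : addrDom emp = ∅ := by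
  ext a; simp [addrDom, emp]

lemma disj_emp_right (h : Heap) : Disj h emp := by
  simp [Disj, addrDom_emp]

lemma disj_emp_left (h : Heap) : Disj emp h := by
  simp [Disj, addrDom_emp]

/-- Sufficient condition for separation: every thread owns `emp`, except
possibly thread `0`, which owns something disjoint from the shared heap. -/
lemma sep_gen {s : Heap} {cf : Cf C}
    (h : ∀ i c, cf i = some c → c.2 = emp ∨ (i = 0 ∧ Disj s c.2)) :
    Separated s cf := by
  constructor
  · intro i c hc
    rcases h i c hc with he | ⟨_, hd⟩
    · rw [he]; exact disj_emp_right s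
    · exact hd
  · intro i j ci cj hij hi hj
    rcases h i ci hi with hei | ⟨hi0, _⟩
    · rw [hei]; exact disj_emp_left _
    · rcases h j cj hj with hej | ⟨hj0, _⟩
      · rw [hej]; exact disj_emp_right _
      · exact absurd (hi0.trans hj0.symm) hij

lemma cfInit_snd_emp {L : Program C} {i : ℕ} {cc : Config C}
    (h : cfInit L i = some cc) : cc.2 = emp := by
  obtain ⟨T, -, hT⟩ := Option.map_eq_some_iff.mp h
  rw [← hT]

lemma cfInit_cons_zero (T : Thread C) (L : Program C) :
    cfInit (T :: L) 0 = some (T, emp) := by simp [cfInit]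

lemma cfInit_cons_succ (T : Thread C) (L : Program C) (j : ℕ) :
    cfInit (T :: L) (j + 1) = cfInit L j := by simp [cfInit]

lemma cfInit_starP {Q : Program C} {j : ℕ} {T : Thread C} (h : Q[j]? = some T) :
    cfInit (starP Q) j = some (Thread.star T, emp) := by
  simp [cfInit, starP, List.getElem?_map, h]

lemma cfInit_append_lt {P R : Program C} {i : ℕ} (h : i < P.length) :
    cfInit (P ++ R) i = cfInit P i := by
  simp [cfInit, List.getElem?_append_left h]

lemma cfInit_append_ge {P R : Program C} {i : ℕ} (h : P.length ≤ i) :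
    cfInit (P ++ R) i = cfInit R (i - P.length) := by
  simp [cfInit, List.getElem?_append_right h]

/-- The possible shapes of a thread of `Q*` during an execution. -/
def Shape (T c : Thread C) : Prop :=
  c = Thread.star T ∨ c = Thread.seq T (Thread.star T) ∨
    c = Thread.seq Thread.skip (Thread.star T) ∨ c = Thread.skip

/-- A step from a shape either leaves the shared heap unchanged or is a
one-step effect of a `Q`-thread from the empty owned heap. -/
lemma shape_step {sinit : Heap} {Q : Program C} (hQ : Stateless prim sinit Q)
    {s : Heap} (hs : s ∈ Reach prim sinit (starP Q))
    {T : Thread C} (hT : T ∈ Q) {c : Thread C} (hc : Shape T c)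
    {s' : Heap} {c' : Config C} (hstep : SeqStep prim s (c, emp) s' c') :
    ∃ d, c' = (d, emp) ∧ Shape T d ∧
      (s' = s ∨ SeqStep prim s (T, emp) s' (Thread.skip, emp)) := by
  rcases hc with h | h | h | h <;> subst h
  · cases hstep with
    | starUnfold => exact ⟨_, rfl, Or.inr (Or.inl rfl), Or.inl rfl⟩
    | starExit => exact ⟨_, rfl, Or.inr (Or.inr (Or.inr rfl)), Or.inl rfl⟩
  · cases hstep with
    | seqL _ h1 =>
        have h2 := hQ T hT s hs _ _ h1
        injection h2 with h2a h2b
        subst h2a; subst h2b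
        exact ⟨_, rfl, Or.inr (Or.inr (Or.inl rfl)), Or.inr h1⟩
    | seqSkip => exact ⟨_, rfl, Or.inl rfl, Or.inl rfl⟩
  · cases hstep with
    | seqL _ h1 => cases h1
    | seqSkip => exact ⟨_, rfl, Or.inl rfl, Or.inl rfl⟩
  · cases hstep

/-- Shape invariant along executions of `Q*`. -/
lemma qinv_run {sinit : Heap} {Q : Program C} (hQ : Stateless prim sinit Q)
    {st : Heap × Cf C}
    (h : ParSteps prim (sinit, cfInit (starP Q)) st) :
    ∀ i c, st.2 i = some c → ∃ T, Q[i]? = some T ∧ c.2 = emp ∧ Shape T c.1 := by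
  induction h with
  | refl =>
      intro i c hc
      obtain ⟨S, hS, hSc⟩ := Option.map_eq_some_iff.mp hc
      rw [starP, List.getElem?_map] at hS
      obtain ⟨T, hT, hTS⟩ := Option.map_eq_some_iff.mp hS
      exact ⟨T, hT, by rw [← hSc, ← hTS]; exact ⟨rfl, Or.inl rfl⟩⟩
  | @tail b st hab hbc ih =>
      obtain ⟨s1, cf1⟩ := b
      obtain ⟨i, c, c', hcfi, hseq, hcf', hsep⟩ := hbc
      obtain ⟨T, hTi, hemp, hshape⟩ := ih i c hcfi
      obtain ⟨ct, co⟩ := c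
      simp only at hemp; subst hemp
      obtain ⟨d, hd, hshape', -⟩ :=
        shape_step prim hQ ⟨cf1, hab⟩ (List.mem_of_getElem? hTi) hshape hseq
      intro i' cc hcc
      rw [hcf'] at hcc
      by_cases hii : i' = i
      · subst hii
        rw [Function.update_self] at hcc
        cases hcc
        exact ⟨T, hTi, by rw [hd]; exact ⟨rfl, hshape'⟩⟩
      · rw [Function.update_of_ne hii] at hcc
        exact ih i' cc hcc

/-- Classification of effects of `Q*`. -/
lemma effect_classify {sinit : Heap} {Q : Program C} (hQ : Stateless prim sinit Q)
    {s s' : Heap} (h : (s, s') ∈ Effects prim sinit (starP Q)) :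
    s' = s ∨ ∃ (j : ℕ) (T : Thread C), Q[j]? = some T ∧
      SeqStep prim s (T, emp) s' (Thread.skip, emp) := by
  obtain ⟨cfq, cfq', hrun, hstep⟩ := h
  obtain ⟨i, c, c', hcfi, hseq, -, -⟩ := hstep
  obtain ⟨T, hTi, hemp, hshape⟩ := qinv_run prim hQ hrun i c hcfi
  obtain ⟨ct, co⟩ := c
  simp only at hemp; subst hemp
  obtain ⟨d, -, -, hcl⟩ :=
    shape_step prim hQ ⟨cfq, hrun⟩ (List.mem_of_getElem? hTi) hshape hseq
  exact hcl.imp id fun h1 => ⟨i, T, hTi, h1⟩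

/-- Three parallel steps realizing one effect of a summary thread `j`,
returning thread `j` to its original configuration. -/
lemma par_triple {s s' : Heap} {cf : Cf C} {j : ℕ} {T : Thread C}
    (hcf : cf j = some (Thread.star T, emp))
    (hstep : SeqStep prim s (T, emp) s' (Thread.skip, emp))
    (hsep1 : Separated s
      (Function.update cf j (some (Thread.seq T (Thread.star T), emp))))
    (hsep2 : Separated s'
      (Function.update cf j (some (Thread.seq Thread.skip (Thread.star T), emp))))
    (hsep3 : Separated s' cf) :
    ParSteps prim (s, cf) (s', cf) := by
  have e2 : Function.update
      (Function.update cf j (some (Thread.seq T (Thread.star T), emp))) j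
      (some (Thread.seq Thread.skip (Thread.star T), emp)) =
      Function.update cf j (some (Thread.seq Thread.skip (Thread.star T), emp)) :=
    Function.update_idem ..
  have e3 : cf = Function.update
      (Function.update cf j (some (Thread.seq Thread.skip (Thread.star T), emp))) j
      (some (Thread.star T, emp)) := by
    funext i
    by_cases hij : i = j
    · subst hij; rw [Function.update_self, hcf]
    · rw [Function.update_of_ne hij, Function.update_of_ne hij]
  refine Relation.ReflTransGen.head
      (b := (s, Function.update cf j (some (Thread.seq T (Thread.star T), emp)))) ?_
    (Relation.ReflTransGen.head
      (b := (s', Function.update cf j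
        (some (Thread.seq Thread.skip (Thread.star T), emp)))) ?_
      (Relation.ReflTransGen.single ?_))
  · exact ⟨j, _, _, hcf, SeqStep.starUnfold T, rfl, hsep1⟩
  · exact ⟨j, _, _, Function.update_self .., SeqStep.seqL (Thread.star T) hstep,
      e2.symm, hsep2⟩
  · exact ⟨j, _, _, Function.update_self .., SeqStep.seqSkip (Thread.star T),
      e3, hsep3⟩

lemma canonical_ext {sinit s s' : Heap} {Q : Program C} {j : ℕ} {T : Thread C}
    (hrun : ParSteps prim (sinit, cfInit (starP Q)) (s, cfInit (starP Q)))
    (hj : Q[j]? = some T)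
    (hstep : SeqStep prim s (T, emp) s' (Thread.skip, emp)) :
    ParSteps prim (sinit, cfInit (starP Q)) (s', cfInit (starP Q)) := by
  refine hrun.trans (par_triple prim (cfInit_starP hj) hstep ?_ ?_ ?_)
  · apply sep_gen; intro i cc hcc; left
    by_cases hij : i = j
    · subst hij; rw [Function.update_self] at hcc; cases hcc; rfl
    · rw [Function.update_of_ne hij] at hcc; exact cfInit_snd_emp hcc
  · apply sep_gen; intro i cc hcc; left
    by_cases hij : i = j
    · subst hij; rw [Function.update_self] at hcc; cases hcc; rfl
    · rw [Function.update_of_ne hij] at hcc; exact cfInit_snd_emp hcc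
  · apply sep_gen; intro i cc hcc; exact Or.inl (cfInit_snd_emp hcc)

lemma sep_upd2 {Q : Program C} {Tk : Thread C} {s : Heap}
    {co : Option (Config C)} (hco : ∀ cc, co = some cc → Disj s cc.2)
    {j : ℕ} (hj : j ≠ 0) (d : Thread C) :
    Separated s (Function.update
      (Function.update (cfInit (Tk :: starP Q)) 0 co) j (some (d, emp))) := by
  apply sep_gen; intro i cc hcc
  by_cases hij : i = j
  · subst hij; rw [Function.update_self] at hcc; cases hcc; exact Or.inl rfl
  · rw [Function.update_of_ne hij] at hcc
    by_cases hi0 : i = 0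
    · subst hi0; rw [Function.update_self] at hcc
      exact Or.inr ⟨rfl, hco _ hcc⟩
    · rw [Function.update_of_ne hi0] at hcc
      exact Or.inl (cfInit_snd_emp hcc)

lemma sep_upd1 {Q : Program C} {Tk : Thread C} {s : Heap}
    {co : Option (Config C)} (hco : ∀ cc, co = some cc → Disj s cc.2) :
    Separated s (Function.update (cfInit (Tk :: starP Q)) 0 co) := by
  apply sep_gen; intro i cc hcc
  by_cases hi0 : i = 0
  · subst hi0; rw [Function.update_self] at hcc
    exact Or.inr ⟨rfl, hco _ hcc⟩
  · rw [Function.update_of_ne hi0] at hcc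
    exact Or.inl (cfInit_snd_emp hcc)

/-- Simulation of an environment effect in the two-thread system. -/
lemma sim_env {Q : Program C} (Tk : Thread C) {s s' : Heap}
    (co : Option (Config C))
    (hco : ∀ cc, co = some cc → Disj s cc.2 ∧ Disj s' cc.2)
    {j : ℕ} {T : Thread C} (hj : Q[j]? = some T)
    (hstep : SeqStep prim s (T, emp) s' (Thread.skip, emp)) :
    ParSteps prim (s, Function.update (cfInit (Tk :: starP Q)) 0 co)
      (s', Function.update (cfInit (Tk :: starP Q)) 0 co) := by
  refine par_triple prim (j := j + 1) ?_ hstep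
    (sep_upd2 (fun cc h => (hco cc h).1) (Nat.succ_ne_zero j) _)
    (sep_upd2 (fun cc h => (hco cc h).2) (Nat.succ_ne_zero j) _)
    (sep_upd1 (fun cc h => (hco cc h).2))
  rw [Function.update_of_ne (Nat.succ_ne_zero j), cfInit_cons_succ, cfInit_starP hj]

/-- The master invariant of the simulation. -/
def Inv (sinit : Heap) (P Q : Program C) (st : Heap × Cf C) : Prop :=
  ParSteps prim (sinit, cfInit (starP Q)) (st.1, cfInit (starP Q)) ∧
  Separated st.1 st.2 ∧
  (∀ i c, st.2 i = some c → i < P.length + Q.length) ∧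
  (∀ j T, Q[j]? = some T →
    ∃ c, st.2 (P.length + j) = some c ∧ c.2 = emp ∧ Shape T c.1) ∧
  (∀ k Tk, cfInit (P ++ starP Q) k = some (Tk, emp) →
    ParSteps prim (sinit, cfInit (Tk :: starP Q))
      (st.1, Function.update (cfInit (Tk :: starP Q)) 0 (st.2 k)))

lemma inv_steps {sinit : Heap} {P Q : Program C}
    (hQ : Stateless prim sinit Q)
    (hinc : ∀ T ∈ P, Effects prim sinit (T :: starP Q) ⊆
      Effects prim sinit (starP Q))
    {st : Heap × Cf C}
    (hexec : ParSteps prim (sinit, cfInit (P ++ starP Q)) st) :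
    Inv prim sinit P Q st := by
  induction hexec with
  | refl =>
      refine ⟨Relation.ReflTransGen.refl, ?_, ?_, ?_, ?_⟩
      · exact sep_gen fun i c hc => Or.inl (cfInit_snd_emp hc)
      · intro i c hc
        obtain ⟨T, hT, -⟩ := Option.map_eq_some_iff.mp hc
        have := (List.getElem?_eq_some_iff.mp hT).1
        simpa [starP] using this
      · intro j T hj
        refine ⟨(Thread.star T, emp), ?_, rfl, Or.inl rfl⟩
        show cfInit (P ++ starP Q) (P.length + j) = some (Thread.star T, emp)
        rw [cfInit_append_ge (Nat.le_add_right _ _), Nat.add_sub_cancel_left,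
          cfInit_starP hj]
      · intro k Tk hk
        show ParSteps prim (sinit, cfInit (Tk :: starP Q))
          (sinit, Function.update (cfInit (Tk :: starP Q)) 0 (cfInit (P ++ starP Q) k))
        rw [hk, show (some (Tk, emp)) = cfInit (Tk :: starP Q) 0 from
            (cfInit_cons_zero Tk (starP Q)).symm,
          Function.update_eq_self]
        exact Relation.ReflTransGen.refl
  | @tail b st hab hbc ih =>
      obtain ⟨s, cf1⟩ := b
      obtain ⟨s', cf2⟩ := st
      obtain ⟨ha, hsep, hbnd, hc, hb⟩ := ih
      obtain ⟨i, c, c', hcfi, hseq, hcf2, hsep'⟩ := hbc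
      simp only at hcfi hseq hcf2 hsep' ha hsep hbnd hc hb ⊢
      have hc'2 : cf2 i = some c' := by rw [hcf2, Function.update_self]
      have hdirect : ∀ Tk : Thread C,
          ParStep prim (s, Function.update (cfInit (Tk :: starP Q)) 0 (cf1 i))
            (s', Function.update (cfInit (Tk :: starP Q)) 0 (some c')) := by
        intro Tk
        refine ⟨0, c, c', ?_, hseq, (Function.update_idem ..).symm, ?_⟩
        · show Function.update (cfInit (Tk :: starP Q)) 0 (cf1 i) 0 = some c
          rw [Function.update_self]; exact hcfi
        · exact sep_upd1 fun cc h => by cases h; exact hsep'.1 i c' hc'2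
      -- classification of the step, together with the shape update
      have hmain : (s' = s ∨ ∃ (j : ℕ) (T : Thread C), Q[j]? = some T ∧
            SeqStep prim s (T, emp) s' (Thread.skip, emp)) ∧
          (∀ j T, Q[j]? = some T →
            ∃ c, cf2 (P.length + j) = some c ∧ c.2 = emp ∧ Shape T c.1) := by
        rcases Nat.lt_or_ge i P.length with hi | hi
        · constructor
          · have hinitI : cfInit (P ++ starP Q) i = some (P[i], emp) := by
              rw [cfInit_append_lt hi]
              simp [cfInit, List.getElem?_eq_getElem hi]
            have heff : (s, s') ∈ Effects prim sinit (P[i] :: starP Q) :=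
              ⟨_, _, hb i P[i] hinitI, hdirect P[i]⟩
            exact effect_classify prim hQ
              (hinc P[i] (List.getElem_mem hi) heff)
          · intro j T hj
            obtain ⟨c0, hc0, hc0e, hc0s⟩ := hc j T hj
            refine ⟨c0, ?_, hc0e, hc0s⟩
            rw [hcf2, Function.update_of_ne (by omega), hc0]
        · have hib : i < P.length + Q.length := hbnd i c hcfi
          have hj0 : Q[i - P.length]? = some (Q[i - P.length]'(by omega)) :=
            List.getElem?_eq_getElem (by omega)
          obtain ⟨c0, hc0, hc0e, hc0s⟩ := hc (i - P.length) _ hj0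
          rw [show P.length + (i - P.length) = i by omega, hcfi] at hc0
          cases hc0
          obtain ⟨ct, co⟩ := c
          simp only at hc0e; subst hc0e
          obtain ⟨d, hd, hdshape, hcl⟩ :=
            shape_step prim hQ ⟨cfInit (starP Q), ha⟩
              (List.mem_of_getElem? hj0) hc0s hseq
          constructor
          · exact hcl.imp id fun h1 => ⟨i - P.length, _, hj0, h1⟩
          · intro j T hj
            by_cases hji : P.length + j = i
            · have hjj : j = i - P.length := by omega
              subst hjj
              rw [hj0] at hj; cases hj
              refine ⟨(d, emp), ?_, rfl, hdshape⟩
              rw [hji, hcf2, Function.update_self, hd]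
            · obtain ⟨c0, hc0', hc0e', hc0s'⟩ := hc j T hj
              refine ⟨c0, ?_, hc0e', hc0s'⟩
              rw [hcf2, Function.update_of_ne hji, hc0']
      obtain ⟨hcl, hcnew⟩ := hmain
      refine ⟨?_, hsep', ?_, hcnew, ?_⟩
      · rcases hcl with h | ⟨j, T, hj, hT⟩
        · subst h; exact ha
        · exact canonical_ext prim ha hj hT
      · show ∀ i' c'', cf2 i' = some c'' → i' < P.length + Q.length
        intro i' c'' h
        rw [hcf2] at h
        by_cases hii : i' = i
        · subst hii; exact hbnd _ c hcfi
        · rw [Function.update_of_ne hii] at h; exact hbnd i' c'' h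
      · show ∀ k Tk, cfInit (P ++ starP Q) k = some (Tk, emp) →
          ParSteps prim (sinit, cfInit (Tk :: starP Q))
            (s', Function.update (cfInit (Tk :: starP Q)) 0 (cf2 k))
        intro k Tk hk
        by_cases hki : k = i
        · subst hki
          rw [hc'2]
          exact (hb k Tk hk).tail (hdirect Tk)
        · have hck : cf2 k = cf1 k := by rw [hcf2, Function.update_of_ne hki]
          rw [hck]
          rcases hcl with h | ⟨j, T, hj, hT⟩
          · subst h; exact hb k Tk hk
          · refine (hb k Tk hk).trans (sim_env prim Tk (cf1 k) ?_ hj hT)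
            intro cc hcc
            refine ⟨hsep.1 k cc hcc, hsep'.1 k cc ?_⟩
            rw [hck, hcc]

/-- simulation lemma behind effect-inclusion lifting. -/
theorem simulation_lemma
    (hps : PreservesSep prim)
    (sinit : Heap) (P Q : Program C) (hQ : Stateless prim sinit Q)
    (hinc : ∀ T ∈ P, Effects prim sinit (T :: starP Q) ⊆
              Effects prim sinit (starP Q))
    (s : Heap) (cf : Cf C)
    (hexec : ParSteps prim (sinit, cfInit (P ++ starP Q)) (s, cf))
    (k : ℕ) (Tk : Thread C)
    (hk : cfInit (P ++ starP Q) k = some (Tk, emp)) :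
    ParSteps prim (sinit, cfInit (Tk :: starP Q))
      (s, Function.update (cfInit (Tk :: starP Q)) 0 (cf k)) :=
  (inv_steps prim hQ hinc hexec).2.2.2.2 k Tk hk

end Paper
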